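/- For distinct primes p and q and every k ∈ {0, 1, ..., (p−1)(q−1)}, the coefficient a_{pq}(k) of z^{φ(pq)−k} in Φ_{pq}(z) equals H_k(1, ζ_p, ζ_p^2, ..., ζ_p^{p−1}, ζ_q, ..., ζ_q^{q−1}), the complete homogeneous symmetric polynomial of degree k evaluated at the non-primitive pq-th roots of unity, and this value lies in {−1, 0, 1}. -/

import Mathlib

open Polynomial

/-- The complete homogeneous symmetric polynomial of degree `r`
evaluated at the entries of a list. -/
noncomputable def hsymmEval : List ℂ → ℕ → ℂ
  | _, 0 => 1
  | [], _ + 1 => 0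
  | x :: xs, r + 1 => x * hsymmEval (x :: xs) r + hsymmEval xs (r + 1)
  termination_by l r => (r, l.length)

/-- The list of the `φ(m)` primitive `m`-th roots of unity. -/
noncomputable def primRoots (m : ℕ) : List ℂ :=
  ((List.range m).filter (fun j => Nat.gcd (j + 1) m = 1)).map
    (fun j => Complex.exp (2 * (Real.pi : ℂ) * Complex.I * (j + 1 : ℕ) / (m : ℂ)))

/-- The list of the non-primitive `m`-th roots of unity. -/
noncomputable def nonPrimRoots (m : ℕ) : List ℂ :=
  ((List.range m).filter (fun j => 1 < Nat.gcd (j + 1) m)).map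
    (fun j => Complex.exp (2 * (Real.pi : ℂ) * Complex.I * (j + 1 : ℕ) / (m : ℂ)))

/-!
The generating function of the `H_k` over the list `L` of all `p`-th roots of unity and the
nontrivial `q`-th roots of unity is `∏_{ζ ∈ L} (1 - ζ t)⁻¹ = (1 - t) / ((1 - t^p) (1 - t^q))`.
On the other hand `Φ_pq(t) (t^p - 1) (t^q - 1) = (t^{pq} - 1) (t - 1)`, so the reversed polynomial
of `Φ_pq` is `(1 - t^{pq})` times that generating function, and its coefficients below `pq`, which
are the `a_pq(k)`, are the `H_k`. Finally `1 / ((1 - t^p) (1 - t^q)) = ∑ c(k) t^k`, where `c(k)`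
counts the ways of writing `k = i p + j q` with `i, j ≥ 0`; for `k < pq` there is at most one,
hence `H_k = c(k) - c(k - 1) ∈ {-1, 0, 1}`.
-/

open Finset in
theorem Finset.card_filter_antidiagonal_dvd_le_one {p q k : ℕ} (hpq : p.Coprime q)
    (hk : k < p * q) : #{x ∈ antidiagonal k | p ∣ x.1 ∧ q ∣ x.2} ≤ 1 := by
  rw [Finset.card_le_one]
  rintro ⟨a, b⟩ hab ⟨a', b'⟩ hab'
  simp only [Finset.mem_filter, HasAntidiagonal.mem_antidiagonal] at hab hab'
  have hp : (p : ℤ) ∣ a - a' :=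
    (Int.natCast_dvd_natCast.2 hab.2.1).sub (Int.natCast_dvd_natCast.2 hab'.2.1)
  have hq : (q : ℤ) ∣ a - a' := by
    rw [show (a : ℤ) - a' = b' - b by omega]
    exact (Int.natCast_dvd_natCast.2 hab'.2.2).sub (Int.natCast_dvd_natCast.2 hab.2.2)
  have := Int.eq_zero_of_abs_lt_dvd ((Nat.isCoprime_iff_coprime.2 hpq).mul_dvd hp hq)
    (by rw [abs_lt]; omega)
  exact Prod.ext (by omega) (by omega)

theorem IsPrimitiveRoot.prod_range_one_sub_pow_mul {R : Type*} [CommRing R] [IsDomain R]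
    {ζ : R} {n : ℕ} (hζ : IsPrimitiveRoot ζ n) (hn : 0 < n) (x : R) :
    ∏ i ∈ Finset.range n, (1 - ζ ^ i * x) = 1 - x ^ n := by
  simpa [eval_prod] using (congrArg (eval 1) (X_pow_sub_C_eq_prod hζ hn (rfl : x ^ n = x ^ n))).symm

theorem Complex.exp_two_pi_mul_I_mul_div_eq_pow (j n : ℕ) :
    exp (2 * Real.pi * I * j / n) = exp (2 * Real.pi * I / n) ^ j := by
  rw [← exp_nat_mul]
  ring_nf

namespace Polynomial

theorem reverse_X_pow_sub_one {R : Type*} [Ring R] [Nontrivial R] (n : ℕ) :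
    (X ^ n - 1 : R[X]).reverse = 1 - X ^ n := by
  rw [reverse, ← C_1, natDegree_X_pow_sub_C, reflect_sub, reflect_monomial, reflect_C,
    revAt_le le_rfl, Nat.sub_self, pow_zero, C_1, one_mul]

theorem cyclotomic_prime_mul_prime_mul {p q : ℕ} (hp : p.Prime) (hq : q.Prime) (hpq : p ≠ q)
    (R : Type*) [CommRing R] :
    cyclotomic (p * q) R * ((X ^ p - 1) * (X ^ q - 1)) = (X ^ (p * q) - 1) * (X - 1) := by
  have := Fact.mk hq
  have hΦq : cyclotomic q R * (X - 1) = X ^ q - 1 := cyclotomic_prime_mul_X_sub_one R q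
  have hexpand := congrArg (expand R p) hΦq
  rw [map_mul, cyclotomic_expand_eq_cyclotomic_mul hp (by rwa [Nat.prime_dvd_prime_iff_eq hp hq]),
    map_sub, map_sub, map_pow, expand_X, map_one, ← pow_mul, mul_comm q p] at hexpand
  linear_combination (X - 1) * hexpand - cyclotomic (p * q) R * (X ^ p - 1) * hΦq

theorem reverse_cyclotomic_prime_mul_prime_mul {p q : ℕ} (hp : p.Prime) (hq : q.Prime)
    (hpq : p ≠ q) (R : Type*) [CommRing R] [IsDomain R] :
    (cyclotomic (p * q) R).reverse * ((1 - X ^ p) * (1 - X ^ q)) =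
      (1 - X ^ (p * q)) * (1 - X) := by
  have h := congrArg reverse (cyclotomic_prime_mul_prime_mul hp hq hpq R)
  rw [show (X - 1 : R[X]) = X ^ 1 - 1 by rw [pow_one]] at h
  simp only [reverse_mul_of_domain, reverse_X_pow_sub_one] at h
  rwa [pow_one] at h

end Polynomial

namespace PowerSeries

theorem one_sub_C_mul_X_mul_mk_hsymmEval_cons (x : ℂ) (xs : List ℂ) :
    (1 - C x * X) * mk (hsymmEval (x :: xs)) = mk (hsymmEval xs) := by
  ext (_ | n)
  · simp [hsymmEval.eq_1, coeff_zero_eq_constantCoeff]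
  · rw [sub_mul, one_mul, mul_assoc, map_sub, coeff_C_mul, coeff_succ_X_mul, coeff_mk, coeff_mk,
      coeff_mk, hsymmEval.eq_3, add_sub_cancel_left]

theorem prod_map_one_sub_C_mul_X_mul_mk_hsymmEval (L : List ℂ) :
    (L.map fun x => 1 - C x * X).prod * mk (hsymmEval L) = 1 := by
  induction L with
  | nil =>
    ext (_ | n) <;> simp [hsymmEval.eq_1, hsymmEval.eq_2, coeff_one]
  | cons x xs ih =>
    rw [List.map_cons, List.prod_cons, mul_comm (1 - C x * X), mul_assoc,
      one_sub_C_mul_X_mul_mk_hsymmEval_cons, ih]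

theorem prod_map_range_exp {n : ℕ} (hn : 0 < n) :
    (((List.range n).map fun j : ℕ => Complex.exp (2 * Real.pi * Complex.I * j / n)).map
      fun x => 1 - C x * X).prod = 1 - X ^ n := by
  have hζ := (Complex.isPrimitiveRoot_exp n hn.ne').map_of_injective (C_injective (R := ℂ))
  rw [← hζ.prod_range_one_sub_pow_mul hn (X : ℂ⟦X⟧), List.map_map]
  change ∏ j ∈ Finset.range n, _ = _
  refine Finset.prod_congr rfl fun j _ => ?_
  simp [Complex.exp_two_pi_mul_I_mul_div_eq_pow]

theorem one_sub_X_mul_prod_map_range_exp_succ {n : ℕ} (hn : 0 < n) :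
    (1 - X) * (((List.range (n - 1)).map
      fun j : ℕ => Complex.exp (2 * Real.pi * Complex.I * (j + 1 : ℕ) / n)).map
        fun x => 1 - C x * X).prod = 1 - X ^ n := by
  obtain ⟨m, rfl⟩ := Nat.exists_eq_add_of_lt hn
  rw [← prod_map_range_exp hn, List.range_succ_eq_map]
  simp [List.map_map, Function.comp_def]

section dvdSeries

variable (R : Type*)

def dvdSeries [Semiring R] (n : ℕ) : R⟦X⟧ :=
  mk fun k => if n ∣ k then 1 else 0

theorem one_sub_X_pow_mul_dvdSeries [Ring R] {n : ℕ} (hn : 0 < n) :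
    (1 - X ^ n) * dvdSeries R n = 1 := by
  ext m
  rw [sub_mul, one_mul, map_sub, coeff_X_pow_mul', coeff_one, dvdSeries, coeff_mk]
  rcases m.eq_zero_or_pos with rfl | hm
  · simp [hn.ne']
  by_cases hnm : n ≤ m
  · simp [hnm, hm.ne', coeff_mk, Nat.dvd_sub_iff_left hnm dvd_rfl]
  · have hndvd : ¬n ∣ m := fun h => hnm (Nat.le_of_dvd hm h)
    simp [hnm, hm.ne', hndvd]

open Finset in
theorem coeff_dvdSeries_mul_dvdSeries [Semiring R] (p q k : ℕ) :
    coeff k (dvdSeries R p * dvdSeries R q) = #{x ∈ antidiagonal k | p ∣ x.1 ∧ q ∣ x.2} := by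
  rw [coeff_mul, Finset.natCast_card_filter]
  refine Finset.sum_congr rfl fun x _ => ?_
  simp only [dvdSeries, coeff_mk, ite_zero_mul_ite_zero, one_mul]

end dvdSeries

end PowerSeries

noncomputable def nonPrimitiveRoots (p q : ℕ) : List ℂ :=
  (List.range p).map (fun j => Complex.exp (2 * (Real.pi : ℂ) * Complex.I * (j : ℕ) / (p : ℂ))) ++
    (List.range (q - 1)).map
      (fun j => Complex.exp (2 * (Real.pi : ℂ) * Complex.I * (j + 1 : ℕ) / (q : ℂ)))

namespace PowerSeries

theorem prod_map_nonPrimitiveRoots_mul {p q : ℕ} (hp : 0 < p) (hq : 0 < q) :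
    ((nonPrimitiveRoots p q).map fun x => 1 - C x * X).prod * (1 - X) =
      (1 - X ^ p) * (1 - X ^ q) := by
  rw [nonPrimitiveRoots, List.map_append, List.prod_append, mul_assoc, mul_comm _ (1 - X),
    one_sub_X_mul_prod_map_range_exp_succ hq, ← prod_map_range_exp hp]

theorem mk_hsymmEval_nonPrimitiveRoots {p q : ℕ} (hp : 0 < p) (hq : 0 < q) :
    mk (hsymmEval (nonPrimitiveRoots p q)) = (1 - X) * (dvdSeries ℂ p * dvdSeries ℂ q) := by
  set H := mk (hsymmEval (nonPrimitiveRoots p q))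
  have hH := prod_map_one_sub_C_mul_X_mul_mk_hsymmEval (nonPrimitiveRoots p q)
  have hprod := prod_map_nonPrimitiveRoots_mul hp hq
  have hDp := one_sub_X_pow_mul_dvdSeries ℂ hp
  have hDq := one_sub_X_pow_mul_dvdSeries ℂ hq
  linear_combination (1 - X) * dvdSeries ℂ p * dvdSeries ℂ q * hH -
    H * dvdSeries ℂ p * dvdSeries ℂ q * hprod - H * hDp - H * (1 - X ^ p) * dvdSeries ℂ p * hDq

theorem coe_reverse_cyclotomic_prime_mul_prime {p q : ℕ} (hp : p.Prime) (hq : q.Prime)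
    (hpq : p ≠ q) :
    ((cyclotomic (p * q) ℂ).reverse : ℂ⟦X⟧) =
      (1 - X ^ (p * q)) * ((1 - X) * (dvdSeries ℂ p * dvdSeries ℂ q)) := by
  set Ψ : ℂ⟦X⟧ := ↑(cyclotomic (p * q) ℂ).reverse
  have hΨ := congrArg (fun f : ℂ[X] => (f : ℂ⟦X⟧))
    (reverse_cyclotomic_prime_mul_prime_mul hp hq hpq ℂ)
  push_cast at hΨ
  have hDp := one_sub_X_pow_mul_dvdSeries ℂ hp.pos
  have hDq := one_sub_X_pow_mul_dvdSeries ℂ hq.pos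
  linear_combination dvdSeries ℂ p * dvdSeries ℂ q * hΨ - Ψ * hDp -
    Ψ * (1 - X ^ p) * dvdSeries ℂ p * hDq

end PowerSeries

open PowerSeries in
theorem coeff_reverse_cyclotomic_prime_mul_prime {p q k : ℕ} (hp : p.Prime) (hq : q.Prime)
    (hpq : p ≠ q) (hk : k < p * q) :
    (cyclotomic (p * q) ℂ).reverse.coeff k = hsymmEval (nonPrimitiveRoots p q) k := by
  rw [← Polynomial.coeff_coe, coe_reverse_cyclotomic_prime_mul_prime hp hq hpq,
    ← mk_hsymmEval_nonPrimitiveRoots hp.pos hq.pos, sub_mul, one_mul, map_sub,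
    PowerSeries.coeff_X_pow_mul', if_neg hk.not_ge, sub_zero, coeff_mk]

open PowerSeries in
theorem hsymmEval_nonPrimitiveRoots_mem {p q k : ℕ} (hpq : p.Coprime q) (hk : k < p * q) :
    hsymmEval (nonPrimitiveRoots p q) k ∈ ({-1, 0, 1} : Set ℂ) := by
  obtain ⟨hp, hq⟩ := CanonicallyOrderedAdd.mul_pos.1 (k.zero_le.trans_lt hk)
  rcases k with _ | k
  · simp [hsymmEval.eq_1]
  have hcount (n : ℕ) (hn : n < p * q) :
      ∃ c : ℕ, c ≤ 1 ∧ coeff n (dvdSeries ℂ p * dvdSeries ℂ q) = c :=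
    ⟨_, Finset.card_filter_antidiagonal_dvd_le_one hpq hn, coeff_dvdSeries_mul_dvdSeries ℂ p q n⟩
  obtain ⟨a, ha, hca⟩ := hcount (k + 1) hk
  obtain ⟨b, hb, hcb⟩ := hcount k (by omega)
  rw [← coeff_mk (k + 1) (hsymmEval _), mk_hsymmEval_nonPrimitiveRoots hp hq, sub_mul, one_mul,
    map_sub, coeff_succ_X_mul, hca, hcb]
  interval_cases a <;> interval_cases b <;> norm_num

theorem binary_cyclotomic_coeff (p q : ℕ) (hp : p.Prime) (hq : q.Prime) (hpq : p ≠ q) :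
    ∀ k ≤ (p - 1) * (q - 1),
      (Polynomial.cyclotomic (p * q) ℂ).coeff ((p - 1) * (q - 1) - k) =
          hsymmEval
            (((List.range p).map
                (fun j => Complex.exp (2 * (Real.pi : ℂ) * Complex.I * (j : ℕ) / (p : ℂ)))) ++
              ((List.range (q - 1)).map
                (fun j => Complex.exp (2 * (Real.pi : ℂ) * Complex.I * (j + 1 : ℕ) / (q : ℂ)))))
            k ∧
        (Polynomial.cyclotomic (p * q) ℂ).coeff ((p - 1) * (q - 1) - k) ∈
          ({-1, 0, 1} : Set ℂ) := by
  intro k hk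
  have hcop : p.Coprime q := (Nat.coprime_primes hp hq).2 hpq
  have hdeg : (cyclotomic (p * q) ℂ).natDegree = (p - 1) * (q - 1) := by
    rw [natDegree_cyclotomic, Nat.totient_mul hcop, Nat.totient_prime hp, Nat.totient_prime hq]
  have hkpq : k < p * q :=
    hk.trans_lt (Nat.mul_lt_mul'' (Nat.sub_lt hp.pos one_pos) (Nat.sub_lt hq.pos one_pos))
  have hcoeff : (cyclotomic (p * q) ℂ).coeff ((p - 1) * (q - 1) - k) =
      hsymmEval (nonPrimitiveRoots p q) k := by
    rw [← coeff_reverse_cyclotomic_prime_mul_prime hp hq hpq hkpq, coeff_reverse, hdeg, revAt_le hk]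
  exact ⟨hcoeff, hcoeff ▸ hsymmEval_nonPrimitiveRoots_mem hcop hkpq⟩
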